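/- Let G be a topological group such that cl is bounded on some compact neighborhood K of the identity in [G,G] and X an element with one-parameter subgroup t ↦ exp(tX) contained in [G,G]. Define scl(exp(X)) = lim_{n→∞} cl(exp(nX))/n. Then for all t ≥ 0, scl(exp(tX)) = t · scl(exp(X)). -/

import Mathlib

open Filter Topology
open scoped commutatorElement

/-- Commutator length: the least number of commutators whose (ordered) product is `z`. -/
noncomputable def cl {G : Type*} [Group G] (z : G) : ℕ :=
  sInf {n | ∃ f g : Fin n → G, (List.ofFn fun i => ⁅f i, g i⁆).prod = z}

namespace ClAux
variable {G : Type*} [Group G]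

abbrev c : G × G → G := fun p => ⁅p.1, p.2⁆

lemma mem_clset_iff (z : G) (n : ℕ) :
    (∃ f g : Fin n → G, (List.ofFn fun i => ⁅f i, g i⁆).prod = z) ↔
    (∃ l : List (G × G), l.length = n ∧ (l.map c).prod = z) := by
  constructor
  · rintro ⟨f, g, h⟩
    exact ⟨List.ofFn (fun i => (f i, g i)), by simp, by rw [List.map_ofFn]; exact h⟩
  · rintro ⟨l, hl, h⟩
    subst hl
    refine ⟨fun i => (l.get i).1, fun i => (l.get i).2, ?_⟩
    rw [← h]
    conv_rhs => rw [← List.ofFn_get l, List.map_ofFn]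
    rfl

lemma prod_swap (l : List (G × G)) :
    ((l.reverse.map Prod.swap).map c).prod = ((l.map c).prod)⁻¹ := by
  rw [List.prod_inv_reverse]
  simp only [← List.map_reverse, List.map_map]
  refine congrArg List.prod (List.map_congr_left fun p _ => ?_)
  simp [c, commutatorElement_inv]

lemma exists_list (z : G) (hz : z ∈ commutator G) :
    ∃ l : List (G × G), (l.map c).prod = z := by
  rw [commutator_eq_closure] at hz
  induction hz using Subgroup.closure_induction with
  | mem g hg => obtain ⟨a, b, rfl⟩ := hg; exact ⟨[(a, b)], by simp [c]⟩
  | one => exact ⟨[], by simp⟩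
  | mul x y _ _ hx hy =>
      obtain ⟨l₁, h₁⟩ := hx; obtain ⟨l₂, h₂⟩ := hy
      exact ⟨l₁ ++ l₂, by rw [List.map_append, List.prod_append, h₁, h₂]⟩
  | inv x _ hx =>
      obtain ⟨l, h⟩ := hx
      exact ⟨l.reverse.map Prod.swap, by rw [prod_swap, h]⟩

lemma cl_nonempty (z : G) (hz : z ∈ commutator G) :
    {n | ∃ f g : Fin n → G, (List.ofFn fun i => ⁅f i, g i⁆).prod = z}.Nonempty := by
  obtain ⟨l, h⟩ := exists_list z hz
  exact ⟨l.length, (mem_clset_iff z l.length).mpr ⟨l, rfl, h⟩⟩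

lemma cl_le (z : G) (l : List (G × G)) (h : (l.map c).prod = z) : cl z ≤ l.length :=
  Nat.sInf_le ((mem_clset_iff z l.length).mpr ⟨l, rfl, h⟩)

lemma exists_list_cl (z : G) (hz : z ∈ commutator G) :
    ∃ l : List (G × G), l.length = cl z ∧ (l.map c).prod = z :=
  (mem_clset_iff z (cl z)).mp (Nat.sInf_mem (cl_nonempty z hz))

lemma cl_one : cl (1 : G) = 0 :=
  Nat.eq_zero_of_le_zero (cl_le 1 [] (by simp))

lemma cl_mul_le (z w : G) (hz : z ∈ commutator G) (hw : w ∈ commutator G) :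
    cl (z * w) ≤ cl z + cl w := by
  obtain ⟨l₁, hl₁, h₁⟩ := exists_list_cl z hz
  obtain ⟨l₂, hl₂, h₂⟩ := exists_list_cl w hw
  calc cl (z * w) ≤ (l₁ ++ l₂).length :=
        cl_le _ _ (by rw [List.map_append, List.prod_append, h₁, h₂])
    _ = cl z + cl w := by simp [hl₁, hl₂]

lemma cl_inv_le (z : G) (hz : z ∈ commutator G) : cl z⁻¹ ≤ cl z := by
  obtain ⟨l, hl, h⟩ := exists_list_cl z hz
  calc cl z⁻¹ ≤ (l.reverse.map Prod.swap).length := cl_le _ _ (by rw [prod_swap, h])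
    _ = cl z := by simp [hl]

end ClAux

open ClAux in
/-- If `cl` is bounded on the compact piece `φ([0,1])` of a one-parameter subgroup
`φ` contained in the commutator subgroup, then `scl(φ(t)) = t · scl(φ(1))` for
all `t ≥ 0`. -/
theorem stmt11 {G : Type*} [Group G] [TopologicalSpace G] [IsTopologicalGroup G]
    (φ : ℝ → G) (hcont : Continuous φ)
    (hadd : ∀ s t : ℝ, φ (s + t) = φ s * φ t)
    (hmem : ∀ t : ℝ, φ t ∈ commutator G)
    (hbd : ∃ B : ℕ, ∀ t ∈ Set.Icc (0 : ℝ) 1, cl (φ t) ≤ B)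
    (s : ℝ)
    (hs : Tendsto (fun n : ℕ => (cl (φ 1 ^ n) : ℝ) / n) atTop (𝓝 s)) :
    ∀ t : ℝ, 0 ≤ t →
      Tendsto (fun n : ℕ => (cl (φ t ^ n) : ℝ) / n) atTop (𝓝 (t * s)) := by
  obtain ⟨B, hB⟩ := hbd
  have hφ0 : φ 0 = 1 := by
    have h := hadd 0 0
    rw [add_zero] at h
    exact (left_eq_mul.mp h)
  have hpow : ∀ (u : ℝ) (n : ℕ), φ u ^ n = φ (n * u) := by
    intro u n
    induction n with
    | zero => simp [hφ0]
    | succ k ih =>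
        rw [pow_succ, ih, ← hadd]
        congr 1
        push_cast
        ring
  intro t ht
  rcases ht.eq_or_lt with h0 | h0
  · -- t = 0
    subst h0
    simp only [hφ0, one_pow, cl_one, Nat.cast_zero, zero_div, zero_mul]
    exact tendsto_const_nhds
  -- t > 0
  set m : ℕ → ℕ := fun n => ⌊t * n⌋₊ with hm_def
  have hfl : ∀ n : ℕ, (m n : ℝ) ≤ t * n ∧ t * n < m n + 1 := fun n =>
    ⟨Nat.floor_le (by positivity), Nat.lt_floor_add_one _⟩
  -- the fractional part lies in [0,1]
  have hfrac : ∀ n : ℕ, cl (φ (t * n - m n)) ≤ B := by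
    intro n
    refine hB _ ⟨by linarith [(hfl n).1], by linarith [(hfl n).2]⟩
  have hsplit : ∀ n : ℕ, φ (t * n) = φ 1 ^ m n * φ (t * n - m n) := by
    intro n
    rw [hpow 1 (m n), mul_one, ← hadd]
    congr 1
    ring
  -- the two key inequalities
  have hub : ∀ n : ℕ, cl (φ t ^ n) ≤ cl (φ 1 ^ m n) + B := by
    intro n
    rw [hpow t n, mul_comm (n : ℝ) t, hsplit n]
    calc cl (φ 1 ^ m n * φ (t * n - m n))
        ≤ cl (φ 1 ^ m n) + cl (φ (t * n - m n)) :=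
          cl_mul_le _ _ (Subgroup.pow_mem _ (hmem 1) _) (hmem _)
      _ ≤ cl (φ 1 ^ m n) + B := Nat.add_le_add_left (hfrac n) _
  have hlb : ∀ n : ℕ, cl (φ 1 ^ m n) ≤ cl (φ t ^ n) + B := by
    intro n
    have h1 : φ 1 ^ m n = φ (t * n) * (φ (t * n - m n))⁻¹ := by
      rw [hsplit n, mul_assoc, mul_inv_cancel, mul_one]
    rw [h1]
    calc cl (φ (t * n) * (φ (t * n - m n))⁻¹)
        ≤ cl (φ (t * n)) + cl ((φ (t * n - m n))⁻¹) :=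
          cl_mul_le _ _ (hmem _) (Subgroup.inv_mem _ (hmem _))
      _ ≤ cl (φ t ^ n) + B := by
          rw [hpow t n, mul_comm (n : ℝ) t]
          exact Nat.add_le_add_left ((cl_inv_le _ (hmem _)).trans (hfrac n)) _
  have hmtop : Tendsto m atTop atTop :=
    tendsto_nat_floor_atTop.comp ((tendsto_natCast_atTop_atTop (R := ℝ)).const_mul_atTop h0)
  have h1 : Tendsto (fun n : ℕ => (cl (φ 1 ^ m n) : ℝ) / (m n)) atTop (𝓝 s) := hs.comp hmtop
  have h2 : Tendsto (fun n : ℕ => (m n : ℝ) / n) atTop (𝓝 t) := by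
    have hg : Tendsto (fun n : ℕ => t - 1 / (n : ℝ)) atTop (𝓝 t) := by
      simpa using tendsto_const_nhds.sub (tendsto_one_div_atTop_nhds_zero_nat (𝕜 := ℝ))
    refine tendsto_of_tendsto_of_tendsto_of_le_of_le' hg tendsto_const_nhds ?_ ?_
    · filter_upwards [eventually_ge_atTop 1] with n hn
      have hnpos : (0 : ℝ) < n := by exact_mod_cast hn
      rw [le_div_iff₀ hnpos]
      have he : (t - 1 / (n : ℝ)) * n = t * n - 1 := by field_simp
      rw [he]
      linarith [(hfl n).2]
    · filter_upwards [eventually_ge_atTop 1] with n hn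
      have hnpos : (0 : ℝ) < n := by exact_mod_cast hn
      rw [div_le_iff₀ hnpos]
      linarith [(hfl n).1]
  have h3 : Tendsto (fun n : ℕ => (cl (φ 1 ^ m n) : ℝ) / n) atTop (𝓝 (s * t)) := by
    refine Tendsto.congr' ?_ (h1.mul h2)
    filter_upwards [hmtop.eventually_ge_atTop 1] with n hn
    have hmn : (m n : ℝ) ≠ 0 := by
      have : (0 : ℝ) < m n := by exact_mod_cast hn
      exact this.ne'
    field_simp
  have hdiff : Tendsto (fun n : ℕ => (cl (φ t ^ n) : ℝ) / n - (cl (φ 1 ^ m n) : ℝ) / n)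
      atTop (𝓝 0) := by
    refine squeeze_zero_norm (fun n => ?_) (tendsto_const_div_atTop_nhds_zero_nat (B : ℝ))
    rcases Nat.eq_zero_or_pos n with rfl | hn
    · simp
    have hnpos : (0 : ℝ) < n := by exact_mod_cast hn
    have hub' : (cl (φ t ^ n) : ℝ) ≤ (cl (φ 1 ^ m n) : ℝ) + B := by exact_mod_cast hub n
    have hlb' : (cl (φ 1 ^ m n) : ℝ) ≤ (cl (φ t ^ n) : ℝ) + B := by exact_mod_cast hlb n
    rw [Real.norm_eq_abs, ← sub_div, abs_div, abs_of_nonneg hnpos.le]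
    gcongr
    rw [abs_sub_le_iff]
    constructor <;> linarith
  have h4 := h3.add hdiff
  rw [add_zero] at h4
  rw [mul_comm t s]
  exact h4.congr fun n => by ring
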